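/- Let ν ≥ 0 and δ ≥ 0. Then for every measurable function h : ℝ → [0,∞) vanishing on (−∞,0) and every t ≥ 0: ∫₀ᵗ e^{νs} (∫_{s−1}^{s} (s + δ − s')^{−1/2} h(s') ds')² ds ≤ 4 e^{ν} ∫₀ᵗ e^{νs'} h(s')² ds'. -/

import Mathlib

/-!
Write the inner integral as a convolution `∫ κ(s - s') h(s') ds'` with the kernel
`κ(u) = (u + δ)^{-1/2}` on `[0, 1)`, whose total mass is at most `∫₀¹ u^{-1/2} du = 2`.
Cauchy–Schwarz against the measure `κ(s - s') ds'` bounds the squared inner integral by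
`2 ∫ κ(s - s') h(s')² ds'`. After exchanging the order of integration, the weight satisfies
`e^{νs} ≤ e^ν e^{νs'}` on the support `s' ≤ s < s' + 1` of the kernel, and the mass of `κ`
in `s` contributes another factor `2`.
-/

open MeasureTheory Set
open scoped ENNReal

theorem ENNReal.ofReal_sq_le (x : ℝ) : ENNReal.ofReal x ^ 2 ≤ ENNReal.ofReal (x ^ 2) := by
  rw [← sq_abs, ENNReal.ofReal_pow (abs_nonneg x)]
  gcongr
  exact le_abs_self x

theorem lintegral_mul_sq_le {α : Type*} [MeasurableSpace α] (μ : Measure α) {K f : α → ℝ≥0∞}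
    (hK : Measurable K) (hf : Measurable f) :
    (∫⁻ x, K x * f x ∂μ) ^ 2 ≤ (∫⁻ x, K x ∂μ) * ∫⁻ x, K x * f x ^ 2 ∂μ := by
  have holder := ENNReal.lintegral_mul_le_Lp_mul_Lq (μ.withDensity K)
    Real.HolderConjugate.two_two aemeasurable_const hf.aemeasurable (f := fun _ => 1)
  simp only [Pi.mul_apply, one_mul, ENNReal.rpow_two, one_pow, lintegral_one,
    withDensity_apply _ MeasurableSet.univ, Measure.restrict_univ] at holder
  rw [lintegral_withDensity_eq_lintegral_mul _ hK hf,
    lintegral_withDensity_eq_lintegral_mul _ hK (hf.pow_const 2)] at holder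
  calc (∫⁻ x, K x * f x ∂μ) ^ 2 ≤ (_ * _) ^ 2 := by gcongr; exact holder
    _ = _ := by
      rw [mul_pow, ← ENNReal.rpow_natCast, ← ENNReal.rpow_mul, ← ENNReal.rpow_natCast,
        ← ENNReal.rpow_mul]
      norm_num

theorem lintegral_mul_conv_sq_le {G : Type*} [MeasurableSpace G] [AddCommGroup G]
    [MeasurableAdd₂ G] [MeasurableNeg G] {μ : Measure G} [SFinite μ] [μ.IsAddLeftInvariant]
    [μ.IsNegInvariant] {κ g w : G → ℝ≥0∞} (hκ : Measurable κ) (hg : Measurable g)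
    (hw : Measurable w) :
    ∫⁻ s, w s * (∫⁻ s', κ (s - s') * g s' ∂μ) ^ 2 ∂μ ≤
      (∫⁻ u, κ u ∂μ) * ∫⁻ s', g s' ^ 2 * ∫⁻ s, w s * κ (s - s') ∂μ ∂μ := by
  have hF : Measurable fun p : G × G => w p.1 * κ (p.1 - p.2) * g p.2 ^ 2 := by fun_prop
  have row (s : G) : (∫⁻ s', κ (s - s') * g s' ∂μ) ^ 2 ≤
      (∫⁻ u, κ u ∂μ) * ∫⁻ s', κ (s - s') * g s' ^ 2 ∂μ := by
    simpa only [Function.comp_def, lintegral_sub_left_eq_self κ s] using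
      lintegral_mul_sq_le μ (hκ.comp (measurable_const_sub s)) hg
  calc ∫⁻ s, w s * (∫⁻ s', κ (s - s') * g s' ∂μ) ^ 2 ∂μ
      ≤ ∫⁻ s, w s * ((∫⁻ u, κ u ∂μ) * ∫⁻ s', κ (s - s') * g s' ^ 2 ∂μ) ∂μ := by
        gcongr with s; exact row s
    _ = (∫⁻ u, κ u ∂μ) * ∫⁻ s, ∫⁻ s', w s * κ (s - s') * g s' ^ 2 ∂μ ∂μ := by
        rw [← lintegral_const_mul _ hF.lintegral_prod_right']
        refine lintegral_congr fun s => ?_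
        rw [mul_left_comm, ← lintegral_const_mul _ (by fun_prop)]
        simp only [mul_assoc]
    _ = (∫⁻ u, κ u ∂μ) * ∫⁻ s', g s' ^ 2 * ∫⁻ s, w s * κ (s - s') ∂μ ∂μ := by
        rw [lintegral_lintegral_swap hF.aemeasurable]
        congr 1
        refine lintegral_congr fun s' => ?_
        rw [mul_comm, ← lintegral_mul_const _ (by fun_prop)]

theorem lintegral_Ioc_rpow_neg_half :
    ∫⁻ u in Ioc (0 : ℝ) 1, ENNReal.ofReal (u ^ (-(1/2) : ℝ)) = 2 := by
  rw [← ofReal_integral_eq_lintegral_ofReal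
      (intervalIntegral.intervalIntegrable_rpow' (by norm_num)).1
      (ae_restrict_of_forall_mem measurableSet_Ioc fun u hu => Real.rpow_nonneg hu.1.le _),
    ← intervalIntegral.integral_of_le zero_le_one, integral_rpow (Or.inl (by norm_num))]
  norm_num

/-- The kernel `(s + δ - s')^{-1/2} 𝟙{s - 1 < s' ≤ s}` as a function of `u = s - s'`. -/
noncomputable def shortTimeKernel (δ : ℝ) : ℝ → ℝ≥0∞ :=
  (Ico 0 1).indicator fun u => ENNReal.ofReal ((u + δ) ^ (-(1/2) : ℝ))

noncomputable def expWeight (ν t : ℝ) : ℝ → ℝ≥0∞ :=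
  (Ioc 0 t).indicator fun s => ENNReal.ofReal (Real.exp (ν * s))

theorem measurable_shortTimeKernel (δ : ℝ) : Measurable (shortTimeKernel δ) :=
  (by fun_prop : Measurable fun u : ℝ => ENNReal.ofReal ((u + δ) ^ (-(1/2) : ℝ))).indicator
    measurableSet_Ico

theorem measurable_expWeight (ν t : ℝ) : Measurable (expWeight ν t) :=
  (by fun_prop : Measurable fun s : ℝ => ENNReal.ofReal (Real.exp (ν * s))).indicator
    measurableSet_Ioc

theorem lintegral_shortTimeKernel_le {δ : ℝ} (hδ : 0 ≤ δ) : ∫⁻ u, shortTimeKernel δ u ≤ 2 := by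
  rw [shortTimeKernel, lintegral_indicator measurableSet_Ico,
    Measure.restrict_congr_set Ico_ae_eq_Ioc, ← lintegral_Ioc_rpow_neg_half]
  refine setLIntegral_mono' measurableSet_Ioc fun u hu => ENNReal.ofReal_le_ofReal ?_
  exact Real.rpow_le_rpow_of_nonpos hu.1 (le_add_of_nonneg_right hδ) (by norm_num)

theorem setLIntegral_Ioc_eq_lintegral_shortTimeKernel_mul {δ : ℝ} (hδ : 0 ≤ δ) (h : ℝ → ℝ)
    (s : ℝ) :
    ∫⁻ s' in Ioc (s - 1) s, ENNReal.ofReal ((s + δ - s') ^ (-(1/2) : ℝ) * h s') =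
      ∫⁻ s', shortTimeKernel δ (s - s') * ENNReal.ofReal (h s') := by
  rw [← lintegral_indicator measurableSet_Ioc]
  refine lintegral_congr fun s' => ?_
  have hmem : s' ∈ Ioc (s - 1) s ↔ s - s' ∈ Ico 0 1 := by
    simp only [mem_Ioc, mem_Ico]
    constructor <;> intro hx <;> constructor <;> linarith [hx.1, hx.2]
  by_cases hs' : s' ∈ Ioc (s - 1) s
  · rw [indicator_of_mem hs', shortTimeKernel, indicator_of_mem (hmem.1 hs'),
      ENNReal.ofReal_mul (Real.rpow_nonneg (by linarith [hs'.2]) _), sub_add_eq_add_sub]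
  · rw [indicator_of_notMem hs', shortTimeKernel, indicator_of_notMem (hmem.not.1 hs'),
      zero_mul]

theorem lintegral_expWeight_mul_shortTimeKernel_le {ν δ : ℝ} (hν : 0 ≤ ν) (hδ : 0 ≤ δ)
    (t s' : ℝ) :
    ∫⁻ s, expWeight ν t s * shortTimeKernel δ (s - s') ≤
      (Iic t).indicator (fun s' => 2 * ENNReal.ofReal (Real.exp ν * Real.exp (ν * s'))) s' := by
  by_cases hs' : s' ≤ t
  · rw [indicator_of_mem (mem_Iic.2 hs')]
    calc _ ≤ ∫⁻ s, ENNReal.ofReal (Real.exp ν * Real.exp (ν * s')) *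
            shortTimeKernel δ (s - s') := by
          refine lintegral_mono fun s => ?_
          by_cases hu : s - s' ∈ Ico 0 1
          · gcongr
            refine (indicator_le_self _ _ s).trans (ENNReal.ofReal_le_ofReal ?_)
            rw [← Real.exp_add]
            gcongr
            nlinarith [hu.2]
          · simp [shortTimeKernel, indicator_of_notMem hu]
      _ ≤ ENNReal.ofReal (Real.exp ν * Real.exp (ν * s')) * 2 := by
          rw [lintegral_const_mul' _ _ ENNReal.ofReal_ne_top,
            lintegral_sub_right_eq_self (shortTimeKernel δ) s']
          gcongr
          exact lintegral_shortTimeKernel_le hδ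
      _ = _ := mul_comm _ _
  · rw [indicator_of_notMem (by simpa using hs')]
    have vanish (s : ℝ) : expWeight ν t s * shortTimeKernel δ (s - s') = 0 := by
      by_cases hs : s ∈ Ioc 0 t
      · have hu : s - s' ∉ Ico 0 1 := fun hu => hs' (by linarith [hu.1, hs.2])
        rw [shortTimeKernel, indicator_of_notMem hu, mul_zero]
      · rw [expWeight, indicator_of_notMem hs, zero_mul]
    simp only [vanish, lintegral_zero, le_refl]

theorem lintegral_sq_mul_lintegral_expWeight_mul_shortTimeKernel_le {ν δ : ℝ} (hν : 0 ≤ ν)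
    (hδ : 0 ≤ δ) {h : ℝ → ℝ} (hvanish : ∀ s < 0, h s = 0) (t : ℝ) :
    ∫⁻ s', ENNReal.ofReal (h s') ^ 2 * ∫⁻ s, expWeight ν t s * shortTimeKernel δ (s - s') ≤
      2 * ENNReal.ofReal (Real.exp ν) *
        ∫⁻ s' in Ioc 0 t, ENNReal.ofReal (Real.exp (ν * s') * h s' ^ 2) := by
  set F : ℝ → ℝ≥0∞ := fun s' => 2 * ENNReal.ofReal (Real.exp ν * Real.exp (ν * s'))
  have support_subset :
      (fun s' => ENNReal.ofReal (h s') ^ 2 * (Iic t).indicator F s').support ⊆ Icc 0 t := by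
    intro s' hs'
    by_contra hout
    rcases not_and_or.1 hout with hneg | hgt
    · exact hs' (by simp [hvanish s' (not_le.1 hneg)])
    · exact hs' (by simp [indicator, hgt])
  calc _ ≤ ∫⁻ s', ENNReal.ofReal (h s') ^ 2 * (Iic t).indicator F s' := by
        gcongr with s'
        exact lintegral_expWeight_mul_shortTimeKernel_le hν hδ t s'
    _ = ∫⁻ s' in Ioc 0 t, ENNReal.ofReal (h s') ^ 2 * F s' := by
        rw [← setLIntegral_eq_of_support_subset support_subset,
          Measure.restrict_congr_set Ioc_ae_eq_Icc.symm]
        exact setLIntegral_congr_fun measurableSet_Ioc fun s' hs' => by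
          rw [indicator_of_mem (mem_Iic.2 hs'.2)]
    _ ≤ _ := by
        rw [← lintegral_const_mul' _ _ (by finiteness)]
        refine setLIntegral_mono' measurableSet_Ioc fun s' _ => ?_
        rw [ENNReal.ofReal_mul (by positivity)]
        calc ENNReal.ofReal (h s') ^ 2 * F s'
            = 2 * ENNReal.ofReal (Real.exp ν) *
                (ENNReal.ofReal (Real.exp (ν * s')) * ENNReal.ofReal (h s') ^ 2) := by
              simp only [F, ENNReal.ofReal_mul (Real.exp_nonneg ν)]
              ring
          _ ≤ _ := by gcongr; exact ENNReal.ofReal_sq_le (h s')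

theorem statement19_general (ν δ : ℝ) (hν : 0 ≤ ν) (hδ : 0 ≤ δ)
    (h : ℝ → ℝ) (hmeas : Measurable h)
    (hvanish : ∀ s < (0:ℝ), h s = 0)
    (t : ℝ) :
    (∫⁻ s in Set.Ioc (0:ℝ) t, ENNReal.ofReal (Real.exp (ν*s)) *
        (∫⁻ s' in Set.Ioc (s-1) s,
          ENNReal.ofReal ((s + δ - s') ^ (-(1/2) : ℝ) * h s'))^2)
    ≤ ENNReal.ofReal (4 * Real.exp ν) *
        ∫⁻ s' in Set.Ioc (0:ℝ) t, ENNReal.ofReal (Real.exp (ν*s') * (h s')^2) := by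
  calc _ = ∫⁻ s, expWeight ν t s *
          (∫⁻ s', shortTimeKernel δ (s - s') * ENNReal.ofReal (h s')) ^ 2 := by
        simp_rw [setLIntegral_Ioc_eq_lintegral_shortTimeKernel_mul hδ h]
        rw [← lintegral_indicator measurableSet_Ioc]
        simp only [expWeight, indicator_mul_left]
    _ ≤ (∫⁻ u, shortTimeKernel δ u) * ∫⁻ s', ENNReal.ofReal (h s') ^ 2 *
          ∫⁻ s, expWeight ν t s * shortTimeKernel δ (s - s') :=
        lintegral_mul_conv_sq_le (measurable_shortTimeKernel δ) hmeas.ennreal_ofReal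
          (measurable_expWeight ν t)
    _ ≤ 2 * (2 * ENNReal.ofReal (Real.exp ν) *
          ∫⁻ s' in Ioc 0 t, ENNReal.ofReal (Real.exp (ν * s') * h s' ^ 2)) := by
        gcongr
        · exact lintegral_shortTimeKernel_le hδ
        · exact lintegral_sq_mul_lintegral_expWeight_mul_shortTimeKernel_le hν hδ hvanish t
    _ = _ := by
        rw [ENNReal.ofReal_mul (by norm_num), ENNReal.ofReal_ofNat, ← mul_assoc, ← mul_assoc]
        norm_num

/-- the weighted convolution estimate for the short-time kernel
`(s + δ − s')^{-1/2}`.  Both sides live in the extended reals. -/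
theorem statement19 (ν δ : ℝ) (hν : 0 ≤ ν) (hδ : 0 ≤ δ)
    (h : ℝ → ℝ) (hmeas : Measurable h) (hnonneg : ∀ s, 0 ≤ h s)
    (hvanish : ∀ s < (0:ℝ), h s = 0)
    (t : ℝ) (ht : 0 ≤ t) :
    (∫⁻ s in Set.Ioc (0:ℝ) t, ENNReal.ofReal (Real.exp (ν*s)) *
        (∫⁻ s' in Set.Ioc (s-1) s,
          ENNReal.ofReal ((s + δ - s') ^ (-(1/2) : ℝ) * h s'))^2)
    ≤ ENNReal.ofReal (4 * Real.exp ν) *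
        ∫⁻ s' in Set.Ioc (0:ℝ) t, ENNReal.ofReal (Real.exp (ν*s') * (h s')^2) :=
  statement19_general ν δ hν hδ h hmeas hvanish t
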